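/- arXiv:2005.05743 — 5 statements merged into one kernel-verified Lean document; each statement's English description precedes it below -/
import Mathlib

section
/- Consider the scalar privacy-signaling game with privacy parameter δ > 0. Define r = −(δσx² + σy²)/(2δρ) − √((δσx² + σy²)² − 4δρ²)/(2δρ), the equilibrium encoder γ*(x,y) = x + r·y, Z* = γ*(X,Y), D = σx² + r²σy² + 2rρ, and the linear decoders dX*(z) = ((σx² + rρ)/D)·z and dY*(z) = ((ρ + rσy²)/D)·z. Then these policies form a Nash equilibrium: (a) for every measurable γ : ℝ² → ℝ with γ(X,Y) square-integrable, E[(Y − dY*(γ*(X,Y)))²] − δ·E[(X − dX*(γ*(X,Y)))²] ≤ E[(Y − dY*(γ(X,Y)))²] − δ·E[(X − dX*(γ(X,Y)))²]; and (b) for all measurable dX, dY : ℝ → ℝ with dX(Z*) and dY(Z*) square-integrable, E[(X − dX*(Z*))²] + E[(Y − dY*(Z*))²] ≤ E[(X − dX(Z*))²] + E[(Y − dY(Z*))²]. -/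
/-!
Receiver: for a centred jointly Gaussian pair `(U, Z)` the residual `U - a Z` of the linear
regression `a = Cov(U, Z) / Var Z` is uncorrelated with `Z`, hence independent of it, hence
orthogonal in `L²` to every square-integrable `h(Z)`; so `a Z` minimises `E (U - d(Z))²`. Writing
everything in the independent standard Gaussians `G₁, G₂`, the slopes of `dX*` and `dY*` are exactly
these regression coefficients for `Z* = X + r Y`.

Sender: if `a, b` are the decoder slopes, then `(y - b z)² - δ (x - a z)²` is, as a function of
`z`, the quadratic `-δ a (z - (x + r y))² + const`. Because `r` is a root of
`δ ρ r² + (δ σx² + σy²) r + ρ = 0`, we get `b = -δ r a` and `a (1 - δ r²) = 1`, and `δ r² > 1`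
forces `a < 0`; so `z = x + r y` minimises the sender's cost pointwise.
-/

open MeasureTheory ProbabilityTheory Real

lemma quadratic_eq_zero_of_eq_root {a b c r : ℝ} (ha : a ≠ 0) (hdisc : 0 ≤ discrim a b c)
    (hr : r = -b / (2 * a) - √(discrim a b c) / (2 * a)) : a * r ^ 2 + b * r + c = 0 := by
  rw [sq, quadratic_eq_zero_iff ha (by rw [← sq, sq_sqrt hdisc]) r]
  right
  rw [hr]
  ring

lemma one_lt_mul_sq_of_eq_root {δ ρ B r : ℝ} (hδ : 0 < δ) (hρ : ρ ≠ 0) (hB : 0 ≤ B)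
    (hdisc : 4 * δ * ρ ^ 2 < B ^ 2)
    (hr : r = -B / (2 * δ * ρ) - √(B ^ 2 - 4 * δ * ρ ^ 2) / (2 * δ * ρ)) : 1 < δ * r ^ 2 := by
  have ht := sqrt_nonneg (B ^ 2 - 4 * δ * ρ ^ 2)
  have hr' : δ * r ^ 2 = (B + √(B ^ 2 - 4 * δ * ρ ^ 2)) ^ 2 / (4 * δ * ρ ^ 2) := by
    rw [hr]
    field_simp
    ring
  rw [hr', one_lt_div (by positivity)]
  nlinarith

lemma quadratic_eq_zero_and_one_lt_mul_sq {δ ρ σx σy r : ℝ} (hδ : 0 < δ) (hρ : ρ ≠ 0)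
    (hρ' : ρ ^ 2 < σx ^ 2 * σy ^ 2)
    (hr : r = -(δ * σx ^ 2 + σy ^ 2) / (2 * δ * ρ)
      - √((δ * σx ^ 2 + σy ^ 2) ^ 2 - 4 * δ * ρ ^ 2) / (2 * δ * ρ)) :
    δ * ρ * r ^ 2 + (δ * σx ^ 2 + σy ^ 2) * r + ρ = 0 ∧ 1 < δ * r ^ 2 := by
  have hdisc : 4 * δ * ρ ^ 2 < (δ * σx ^ 2 + σy ^ 2) ^ 2 := by
    nlinarith [sq_nonneg (δ * σx ^ 2 - σy ^ 2), mul_pos hδ (sub_pos.mpr hρ')]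
  refine ⟨quadratic_eq_zero_of_eq_root (by positivity) (by rw [discrim]; nlinarith)
    (by rw [hr, discrim]; ring_nf), one_lt_mul_sq_of_eq_root hδ hρ (by positivity) hdisc hr⟩

lemma quadratic_form_pos {σx σy ρ : ℝ} (hσx : σx ≠ 0) (hρ : ρ ^ 2 < σx ^ 2 * σy ^ 2) (r : ℝ) :
    0 < σx ^ 2 + r ^ 2 * σy ^ 2 + 2 * r * ρ := by
  have hσ : 0 < σx ^ 2 := by positivity
  have hgap := sub_pos.2 hρ
  have key : σx ^ 2 * (σx ^ 2 + r ^ 2 * σy ^ 2 + 2 * r * ρ)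
      = (σx ^ 2 + r * ρ) ^ 2 + r ^ 2 * (σx ^ 2 * σy ^ 2 - ρ ^ 2) := by ring
  refine pos_of_mul_pos_right (key ▸ ?_) hσ.le
  rcases eq_or_ne r 0 with rfl | hr
  · simpa using pow_pos hσ 2
  · positivity

lemma decoder_coeffs_of_quadratic {δ ρ σx σy r D : ℝ}
    (hquad : δ * ρ * r ^ 2 + (δ * σx ^ 2 + σy ^ 2) * r + ρ = 0)
    (hD : D = σx ^ 2 + r ^ 2 * σy ^ 2 + 2 * r * ρ) (hD0 : D ≠ 0) :
    (σx ^ 2 + r * ρ) / D * (1 - δ * r ^ 2) = 1 ∧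
      (ρ + r * σy ^ 2) / D = -(δ * r * ((σx ^ 2 + r * ρ) / D)) := by
  constructor
  · rw [div_mul_eq_mul_div, div_eq_one_iff_eq hD0, hD]
    linear_combination -r * hquad
  · field_simp
    linear_combination hquad

lemma sender_integrand_le {δ a b r : ℝ} (hδa : δ * a ≤ 0) (ha : a * (1 - δ * r ^ 2) = 1)
    (hb : b = -(δ * r * a)) (x y z : ℝ) :
    (y - b * (x + r * y)) ^ 2 - δ * (x - a * (x + r * y)) ^ 2
      ≤ (y - b * z) ^ 2 - δ * (x - a * z) ^ 2 := by
  subst hb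
  have hgap : (y - -(δ * r * a) * z) ^ 2 - δ * (x - a * z) ^ 2
      - ((y - -(δ * r * a) * (x + r * y)) ^ 2 - δ * (x - a * (x + r * y)) ^ 2)
      = -(δ * a) * (z - (x + r * y)) ^ 2 := by
    linear_combination (-(δ * a) * (z ^ 2 - (x + r * y) ^ 2)) * ha
  linarith [mul_nonneg (neg_nonneg.2 hδa) (sq_nonneg (z - (x + r * y)))]

section

variable {Ω : Type*} [MeasurableSpace Ω] {P : Measure Ω}

noncomputable def senderCost (P : Measure Ω) (δ a b : ℝ) (X Y W : Ω → ℝ) : ℝ :=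
  (∫ ω, (Y ω - b * W ω) ^ 2 ∂P) - δ * ∫ ω, (X ω - a * W ω) ^ 2 ∂P

lemma senderCost_eq_integral {δ a b : ℝ} {X Y W : Ω → ℝ} (hX : MemLp X 2 P) (hY : MemLp Y 2 P)
    (hW : MemLp W 2 P) :
    senderCost P δ a b X Y W = ∫ ω, ((Y ω - b * W ω) ^ 2 - δ * (X ω - a * W ω) ^ 2) ∂P := by
  have hY' : Integrable (fun ω => (Y ω - b * W ω) ^ 2) P :=
    (hY.sub (hW.const_mul b)).integrable_sq
  have hX' : Integrable (fun ω => (X ω - a * W ω) ^ 2) P :=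
    (hX.sub (hW.const_mul a)).integrable_sq
  rw [senderCost, integral_sub hY' (hX'.const_mul δ), integral_const_mul]

lemma senderCost_add_mul_le [IsFiniteMeasure P] {X Y W : Ω → ℝ} (hX : MemLp X 2 P)
    (hY : MemLp Y 2 P) (hW : MemLp W 2 P) {δ a b r : ℝ} (hδa : δ * a ≤ 0)
    (ha : a * (1 - δ * r ^ 2) = 1) (hb : b = -(δ * r * a)) :
    senderCost P δ a b X Y (fun ω => X ω + r * Y ω) ≤ senderCost P δ a b X Y W := by
  have hZ : MemLp (fun ω => X ω + r * Y ω) 2 P := hX.add (hY.const_mul r)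
  rw [senderCost_eq_integral hX hY hZ, senderCost_eq_integral hX hY hW]
  refine integral_mono ?_ ?_ fun ω => sender_integrand_le hδa ha hb (X ω) (Y ω) (W ω)
  · exact (hY.sub (hZ.const_mul b)).integrable_sq.sub
      ((hX.sub (hZ.const_mul a)).integrable_sq.const_mul δ)
  · exact (hY.sub (hW.const_mul b)).integrable_sq.sub
      ((hX.sub (hW.const_mul a)).integrable_sq.const_mul δ)

lemma integral_sq_le_integral_add_sq {ε H : Ω → ℝ} (hε : MemLp ε 2 P) (hH : MemLp H 2 P)
    (horth : ∫ ω, ε ω * H ω ∂P = 0) :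
    ∫ ω, ε ω ^ 2 ∂P ≤ ∫ ω, (ε ω + H ω) ^ 2 ∂P := by
  have hεH : Integrable (fun ω => 2 * (ε ω * H ω)) P := (hε.integrable_mul hH).const_mul 2
  have hexpand : ∫ ω, (ε ω + H ω) ^ 2 ∂P
      = ∫ ω, ε ω ^ 2 ∂P + 2 * ∫ ω, ε ω * H ω ∂P + ∫ ω, H ω ^ 2 ∂P := by
    rw [integral_congr_ae (ae_of_all _ fun ω =>
        (show (ε ω + H ω) ^ 2 = ε ω ^ 2 + 2 * (ε ω * H ω) + H ω ^ 2 by ring)),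
      integral_add (f := fun ω => ε ω ^ 2 + 2 * (ε ω * H ω)) (hε.integrable_sq.add hεH)
        hH.integrable_sq,
      integral_add hε.integrable_sq hεH, integral_const_mul]
  have hH_sq : 0 ≤ ∫ ω, H ω ^ 2 ∂P := integral_nonneg fun ω => sq_nonneg (H ω)
  rw [hexpand, horth]
  linarith

lemma ProbabilityTheory.HasGaussianLaw.linComb {U V : Ω → ℝ}
    (hUV : HasGaussianLaw (fun ω => (U ω, V ω)) P) (a b c d : ℝ) :
    HasGaussianLaw (fun ω => (a * U ω + b * V ω, c * U ω + d * V ω)) P :=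
  hUV.map_fun ((a • ContinuousLinearMap.fst ℝ ℝ ℝ + b • ContinuousLinearMap.snd ℝ ℝ ℝ).prod
    (c • ContinuousLinearMap.fst ℝ ℝ ℝ + d • ContinuousLinearMap.snd ℝ ℝ ℝ))

lemma integral_sq_sub_mul_le_of_hasGaussianLaw {U Z : Ω → ℝ}
    (hUZ : HasGaussianLaw (fun ω => (U ω, Z ω)) P) (hU : ∫ ω, U ω ∂P = 0)
    (hZ : ∫ ω, Z ω ∂P = 0) {a : ℝ} (ha : cov[U, Z; P] = a * Var[Z; P]) {d : ℝ → ℝ}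
    (hd : Measurable d) (hdZ : MemLp (fun ω => d (Z ω)) 2 P) :
    ∫ ω, (U ω - a * Z ω) ^ 2 ∂P ≤ ∫ ω, (U ω - d (Z ω)) ^ 2 ∂P := by
  have := hUZ.isProbabilityMeasure
  have hU2 : MemLp U 2 P := hUZ.fst.memLp_two
  have hZ2 : MemLp Z 2 P := hUZ.snd.memLp_two
  have hres : HasGaussianLaw (fun ω => (U ω - a * Z ω, Z ω)) P := by
    simpa [← sub_eq_add_neg] using hUZ.linComb 1 (-a) 0 1
  have hcov : cov[fun ω => U ω - a * Z ω, Z; P] = 0 := by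
    rw [covariance_fun_sub_left hU2 (hZ2.const_mul a) hZ2, covariance_const_mul_left,
      covariance_self hZ2.aemeasurable, ha, sub_self]
  have hindep : IndepFun (fun ω => U ω - a * Z ω) (fun ω => a * Z ω - d (Z ω)) P :=
    (hres.indepFun_of_covariance_eq_zero hcov).comp measurable_id
      ((measurable_id.const_mul a).sub hd)
  have hH2 : MemLp (fun ω => a * Z ω - d (Z ω)) 2 P := (hZ2.const_mul a).sub hdZ
  have horth : ∫ ω, (U ω - a * Z ω) * (a * Z ω - d (Z ω)) ∂P = 0 := by
    rw [hindep.integral_fun_mul_eq_mul_integral (hU2.sub (hZ2.const_mul a)).1 hH2.1,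
      integral_sub hUZ.fst.integrable (hUZ.snd.integrable.const_mul a), integral_const_mul,
      hU, hZ]
    ring
  simpa using integral_sq_le_integral_add_sq (hU2.sub (hZ2.const_mul a)) hH2 horth

lemma covariance_linComb_of_indepFun [IsFiniteMeasure P] {G₁ G₂ : Ω → ℝ} (h₁ : MemLp G₁ 2 P)
    (h₂ : MemLp G₂ 2 P) (hindep : IndepFun G₁ G₂ P) (α₁ α₂ β₁ β₂ : ℝ) :
    cov[fun ω => α₁ * G₁ ω + α₂ * G₂ ω, fun ω => β₁ * G₁ ω + β₂ * G₂ ω; P]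
      = α₁ * β₁ * Var[G₁; P] + α₂ * β₂ * Var[G₂; P] := by
  have hsum (c₁ c₂ : ℝ) : (fun ω => c₁ * G₁ ω + c₂ * G₂ ω)
      = (fun ω => c₁ * G₁ ω) + (fun ω => c₂ * G₂ ω) := rfl
  rw [hsum α₁, hsum β₁, covariance_add_left (h₁.const_mul _) (h₂.const_mul _)
      ((h₁.const_mul _).add (h₂.const_mul _)),
    covariance_add_right (h₁.const_mul _) (h₁.const_mul _) (h₂.const_mul _),
    covariance_add_right (h₂.const_mul _) (h₁.const_mul _) (h₂.const_mul _)]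
  simp only [covariance_const_mul_left, covariance_const_mul_right,
    covariance_self h₁.aemeasurable, covariance_self h₂.aemeasurable,
    hindep.covariance_eq_zero h₁ h₂, hindep.symm.covariance_eq_zero h₂ h₁]
  ring

lemma integral_sq_sub_mul_le_of_stdGaussian {G₁ G₂ : Ω → ℝ}
    (h₁ : HasLaw G₁ (gaussianReal 0 1) P) (h₂ : HasLaw G₂ (gaussianReal 0 1) P)
    (hindep : IndepFun G₁ G₂ P) {U Z : Ω → ℝ} {α₁ α₂ β₁ β₂ a : ℝ}
    (hU : ∀ ω, U ω = α₁ * G₁ ω + α₂ * G₂ ω) (hZ : ∀ ω, Z ω = β₁ * G₁ ω + β₂ * G₂ ω)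
    (ha : a * (β₁ ^ 2 + β₂ ^ 2) = α₁ * β₁ + α₂ * β₂) {d : ℝ → ℝ} (hd : Measurable d)
    (hdZ : MemLp (fun ω => d (Z ω)) 2 P) :
    ∫ ω, (U ω - a * Z ω) ^ 2 ∂P ≤ ∫ ω, (U ω - d (Z ω)) ^ 2 ∂P := by
  obtain rfl : U = _ := funext hU
  obtain rfl : Z = _ := funext hZ
  have g₁ := h₁.hasGaussianLaw
  have g₂ := h₂.hasGaussianLaw
  have := g₁.isProbabilityMeasure
  have hmean (c₁ c₂ : ℝ) : ∫ ω, c₁ * G₁ ω + c₂ * G₂ ω ∂P = 0 := by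
    rw [integral_add (g₁.integrable.const_mul _) (g₂.integrable.const_mul _), integral_const_mul,
      integral_const_mul, h₁.integral_eq, h₂.integral_eq, integral_id_gaussianReal]
    ring
  have hvar₁ : Var[G₁; P] = 1 := by rw [h₁.variance_eq, variance_id_gaussianReal]; rfl
  have hvar₂ : Var[G₂; P] = 1 := by rw [h₂.variance_eq, variance_id_gaussianReal]; rfl
  refine integral_sq_sub_mul_le_of_hasGaussianLaw
    ((hindep.hasGaussianLaw g₁ g₂).linComb α₁ α₂ β₁ β₂) (hmean _ _) (hmean _ _) ?_ hd hdZ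
  rw [← covariance_self (X := fun ω => β₁ * G₁ ω + β₂ * G₂ ω) (by fun_prop),
    covariance_linComb_of_indepFun g₁.memLp_two g₂.memLp_two hindep,
    covariance_linComb_of_indepFun g₁.memLp_two g₂.memLp_two hindep, hvar₁, hvar₂]
  linear_combination -ha

end

theorem stmt_1_general
    {Ω : Type*} [MeasurableSpace Ω] (P : Measure Ω) [IsProbabilityMeasure P]
    (G₁ G₂ : Ω → ℝ) (hG₁ : Measurable G₁) (hG₂ : Measurable G₂)
    (hlaw₁ : P.map G₁ = gaussianReal 0 1) (hlaw₂ : P.map G₂ = gaussianReal 0 1)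
    (hindep : IndepFun G₁ G₂ P)
    (σx σy ρ : ℝ) (hσx : 0 < σx)
    (hρ : 0 < ρ ^ 2) (hρ' : ρ ^ 2 < σx ^ 2 * σy ^ 2)
    (X Y : Ω → ℝ)
    (hX : X = fun ω => σx * G₁ ω)
    (hY : Y = fun ω => (ρ / σx) * G₁ ω + Real.sqrt (σy ^ 2 - ρ ^ 2 / σx ^ 2) * G₂ ω)
    (δ : ℝ) (hδ : 0 < δ)
    (r : ℝ)
    (hr : r = -(δ * σx ^ 2 + σy ^ 2) / (2 * δ * ρ)
        - Real.sqrt ((δ * σx ^ 2 + σy ^ 2) ^ 2 - 4 * δ * ρ ^ 2) / (2 * δ * ρ))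
    (γstar : ℝ × ℝ → ℝ) (hγstar : γstar = fun p => p.1 + r * p.2)
    (Zstar : Ω → ℝ) (hZstar : Zstar = fun ω => γstar (X ω, Y ω))
    (D : ℝ) (hD : D = σx ^ 2 + r ^ 2 * σy ^ 2 + 2 * r * ρ)
    (dXstar dYstar : ℝ → ℝ)
    (hdX : dXstar = fun z => ((σx ^ 2 + r * ρ) / D) * z)
    (hdY : dYstar = fun z => ((ρ + r * σy ^ 2) / D) * z) :
    -- (a) the sender cannot improve by a unilateral deviation
    (∀ γ : ℝ × ℝ → ℝ, Measurable γ →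
      MemLp (fun ω => γ (X ω, Y ω)) 2 P →
      (∫ ω, (Y ω - dYstar (γstar (X ω, Y ω))) ^ 2 ∂P)
        - δ * (∫ ω, (X ω - dXstar (γstar (X ω, Y ω))) ^ 2 ∂P)
      ≤ (∫ ω, (Y ω - dYstar (γ (X ω, Y ω))) ^ 2 ∂P)
        - δ * (∫ ω, (X ω - dXstar (γ (X ω, Y ω))) ^ 2 ∂P)) ∧
    -- (b) the receiver cannot improve by a unilateral deviation
    (∀ dX dY : ℝ → ℝ, Measurable dX → Measurable dY →
      MemLp (fun ω => dX (Zstar ω)) 2 P → MemLp (fun ω => dY (Zstar ω)) 2 P →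
      (∫ ω, (X ω - dXstar (Zstar ω)) ^ 2 ∂P) + (∫ ω, (Y ω - dYstar (Zstar ω)) ^ 2 ∂P)
      ≤ (∫ ω, (X ω - dX (Zstar ω)) ^ 2 ∂P) + (∫ ω, (Y ω - dY (Zstar ω)) ^ 2 ∂P)) := by
  have hρ0 : ρ ≠ 0 := by rintro rfl; simp at hρ
  obtain ⟨hquad, hδr⟩ := quadratic_eq_zero_and_one_lt_mul_sq hδ hρ0 hρ' hr
  have hD0 : 0 < D := hD ▸ quadratic_form_pos hσx.ne' hρ' r
  obtain ⟨ha, hb⟩ := decoder_coeffs_of_quadratic hquad hD hD0.ne'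
  set s := √(σy ^ 2 - ρ ^ 2 / σx ^ 2)
  have hs : s ^ 2 = σy ^ 2 - ρ ^ 2 / σx ^ 2 :=
    sq_sqrt (sub_nonneg.2 ((div_le_iff₀ (by positivity)).2 (by linarith)))
  have hDsum : D = (σx + r * ρ / σx) ^ 2 + (r * s) ^ 2 := by
    rw [hD, mul_pow, hs]
    field_simp
    ring
  have h₁ : HasLaw G₁ (gaussianReal 0 1) P := ⟨hG₁.aemeasurable, hlaw₁⟩
  have h₂ : HasLaw G₂ (gaussianReal 0 1) P := ⟨hG₂.aemeasurable, hlaw₂⟩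
  have hG₁2 := h₁.hasGaussianLaw.memLp_two
  have hG₂2 := h₂.hasGaussianLaw.memLp_two
  subst hX hY hγstar hZstar hdX hdY
  have hZ (ω : Ω) : σx * G₁ ω + r * (ρ / σx * G₁ ω + s * G₂ ω)
      = (σx + r * ρ / σx) * G₁ ω + r * s * G₂ ω := by ring
  refine ⟨fun γ _ hγ => ?_, fun dX dY hdXm hdYm hdX2 hdY2 => add_le_add ?_ ?_⟩
  · exact senderCost_add_mul_le (hG₁2.const_mul σx) ((hG₁2.const_mul _).add (hG₂2.const_mul _))
      hγ (by nlinarith) ha hb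
  · refine integral_sq_sub_mul_le_of_stdGaussian h₁ h₂ hindep (α₂ := 0) (fun ω => by ring) hZ
      ?_ hdXm hdX2
    rw [← hDsum]
    field_simp
    ring
  · refine integral_sq_sub_mul_le_of_stdGaussian h₁ h₂ hindep (fun ω => rfl) hZ ?_ hdYm hdY2
    rw [← hDsum, div_mul_cancel₀ _ hD0.ne', show s * (r * s) = r * s ^ 2 by ring, hs]
    field_simp
    ring

theorem stmt_1
    {Ω : Type*} [MeasurableSpace Ω] (P : Measure Ω) [IsProbabilityMeasure P]
    (G₁ G₂ : Ω → ℝ) (hG₁ : Measurable G₁) (hG₂ : Measurable G₂)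
    (hlaw₁ : P.map G₁ = gaussianReal 0 1) (hlaw₂ : P.map G₂ = gaussianReal 0 1)
    (hindep : IndepFun G₁ G₂ P)
    (σx σy ρ : ℝ) (hσx : 0 < σx) (hσy : 0 < σy)
    (hρ : 0 < ρ ^ 2) (hρ' : ρ ^ 2 < σx ^ 2 * σy ^ 2)
    (X Y : Ω → ℝ)
    (hX : X = fun ω => σx * G₁ ω)
    (hY : Y = fun ω => (ρ / σx) * G₁ ω + Real.sqrt (σy ^ 2 - ρ ^ 2 / σx ^ 2) * G₂ ω)
    (δ : ℝ) (hδ : 0 < δ)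
    (r : ℝ)
    (hr : r = -(δ * σx ^ 2 + σy ^ 2) / (2 * δ * ρ)
        - Real.sqrt ((δ * σx ^ 2 + σy ^ 2) ^ 2 - 4 * δ * ρ ^ 2) / (2 * δ * ρ))
    (γstar : ℝ × ℝ → ℝ) (hγstar : γstar = fun p => p.1 + r * p.2)
    (Zstar : Ω → ℝ) (hZstar : Zstar = fun ω => γstar (X ω, Y ω))
    (D : ℝ) (hD : D = σx ^ 2 + r ^ 2 * σy ^ 2 + 2 * r * ρ)
    (dXstar dYstar : ℝ → ℝ)
    (hdX : dXstar = fun z => ((σx ^ 2 + r * ρ) / D) * z)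
    (hdY : dYstar = fun z => ((ρ + r * σy ^ 2) / D) * z) :
    -- (a) the sender cannot improve by a unilateral deviation
    (∀ γ : ℝ × ℝ → ℝ, Measurable γ →
      MemLp (fun ω => γ (X ω, Y ω)) 2 P →
      (∫ ω, (Y ω - dYstar (γstar (X ω, Y ω))) ^ 2 ∂P)
        - δ * (∫ ω, (X ω - dXstar (γstar (X ω, Y ω))) ^ 2 ∂P)
      ≤ (∫ ω, (Y ω - dYstar (γ (X ω, Y ω))) ^ 2 ∂P)
        - δ * (∫ ω, (X ω - dXstar (γ (X ω, Y ω))) ^ 2 ∂P)) ∧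
    -- (b) the receiver cannot improve by a unilateral deviation
    (∀ dX dY : ℝ → ℝ, Measurable dX → Measurable dY →
      MemLp (fun ω => dX (Zstar ω)) 2 P → MemLp (fun ω => dY (Zstar ω)) 2 P →
      (∫ ω, (X ω - dXstar (Zstar ω)) ^ 2 ∂P) + (∫ ω, (Y ω - dYstar (Zstar ω)) ^ 2 ∂P)
      ≤ (∫ ω, (X ω - dX (Zstar ω)) ^ 2 ∂P) + (∫ ω, (Y ω - dY (Zstar ω)) ^ 2 ∂P)) :=
  stmt_1_general P G₁ G₂ hG₁ hG₂ hlaw₁ hlaw₂ hindep σx σy ρ hσx hρ hρ' X Y hX hY δ hδ r hr γstar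
    hγstar Zstar hZstar D hD dXstar dYstar hdX hdY
end

section
/- Let σx, σy > 0, ρ ∈ ℝ with ρ ≠ 0 and ρ² < σx²·σy², and δ > 0. Let D = [[−δσx², ρ],[−δρ, σy²]], let λ₁ = (−δσx² + σy²)/2 + √((δσx² + σy²)² − 4δρ²)/2, and let r = −(δσx² + σy²)/(2δρ) − √((δσx² + σy²)² − 4δρ²)/(2δρ). Then the vector v = (1, r) is a left eigenvector of D associated with λ₁; that is, vᵀ D = λ₁ · vᵀ (equivalently, Dᵀ v = λ₁ · v). -/
open Matrix

/-- The first column forces the second coordinate `(μ - a) / c`; the second column is then the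
characteristic equation `μ² - tr A · μ + det A = 0`. -/
theorem Matrix.vecMul_eq_smul_of_sq_sub_trace_mul_add_det_eq_zero {K : Type*} [Field K]
    (A : Matrix (Fin 2) (Fin 2) K) (hA : A 1 0 ≠ 0) {μ : K}
    (hμ : μ ^ 2 - A.trace * μ + A.det = 0) :
    vecMul ![1, (μ - A 0 0) / A 1 0] A = μ • ![1, (μ - A 0 0) / A 1 0] := by
  ext i
  fin_cases i
  · simp [vecMul, dotProduct, Fin.sum_univ_two, div_mul_cancel₀ _ hA]
  · simp only [trace_fin_two, det_fin_two] at hμ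
    simp only [vecMul, dotProduct, Fin.sum_univ_two, Fin.isValue, Fin.mk_one, cons_val_zero,
      one_mul, cons_val_one, cons_val_fin_one, Pi.smul_apply, smul_eq_mul]
    field_simp
    linear_combination -hμ

theorem stmt_7_general
    (σx σy ρ δ : ℝ)
    (hρ : ρ ≠ 0) (hρ' : ρ ^ 2 < σx ^ 2 * σy ^ 2) (hδ : 0 < δ)
    (D : Matrix (Fin 2) (Fin 2) ℝ)
    (hD : D = !![-δ * σx ^ 2, ρ; -δ * ρ, σy ^ 2])
    (lam₁ : ℝ)
    (hlam₁ : lam₁ = (-δ * σx ^ 2 + σy ^ 2) / 2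
        + Real.sqrt ((δ * σx ^ 2 + σy ^ 2) ^ 2 - 4 * δ * ρ ^ 2) / 2)
    (r : ℝ)
    (hr : r = -(δ * σx ^ 2 + σy ^ 2) / (2 * δ * ρ)
        - Real.sqrt ((δ * σx ^ 2 + σy ^ 2) ^ 2 - 4 * δ * ρ ^ 2) / (2 * δ * ρ))
    (v : Fin 2 → ℝ) (hv : v = ![1, r]) :
    Matrix.vecMul v D = lam₁ • v ∧ Dᵀ.mulVec v = lam₁ • v := by
  -- `(δσx² + σy²)² ≥ 4δσx²σy²` by AM-GM
  have hdisc : 0 ≤ (δ * σx ^ 2 + σy ^ 2) ^ 2 - 4 * δ * ρ ^ 2 := by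
    nlinarith [sq_nonneg (δ * σx ^ 2 - σy ^ 2)]
  have hroot : lam₁ ^ 2 - D.trace * lam₁ + D.det = 0 := by
    rw [hlam₁, hD, trace_fin_two_of, det_fin_two_of]
    linear_combination (1 / 4 : ℝ) * Real.sq_sqrt hdisc
  have hv' : v = ![1, (lam₁ - D 0 0) / D 1 0] := by
    rw [hv, hr, hlam₁, hD]
    simp only [of_apply, cons_val', cons_val_zero, cons_val_one, empty_val', cons_val_fin_one]
    congr 2
    field_simp
    ring
  have hleft : vecMul v D = lam₁ • v :=
    hv' ▸ D.vecMul_eq_smul_of_sq_sub_trace_mul_add_det_eq_zero (by simp [hD, hδ.ne', hρ]) hroot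
  exact ⟨hleft, by rwa [mulVec_transpose]⟩

theorem stmt_7
    (σx σy ρ δ : ℝ) (hσx : 0 < σx) (hσy : 0 < σy)
    (hρ : ρ ≠ 0) (hρ' : ρ ^ 2 < σx ^ 2 * σy ^ 2) (hδ : 0 < δ)
    (D : Matrix (Fin 2) (Fin 2) ℝ)
    (hD : D = !![-δ * σx ^ 2, ρ; -δ * ρ, σy ^ 2])
    (lam₁ : ℝ)
    (hlam₁ : lam₁ = (-δ * σx ^ 2 + σy ^ 2) / 2
        + Real.sqrt ((δ * σx ^ 2 + σy ^ 2) ^ 2 - 4 * δ * ρ ^ 2) / 2)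
    (r : ℝ)
    (hr : r = -(δ * σx ^ 2 + σy ^ 2) / (2 * δ * ρ)
        - Real.sqrt ((δ * σx ^ 2 + σy ^ 2) ^ 2 - 4 * δ * ρ ^ 2) / (2 * δ * ρ))
    (v : Fin 2 → ℝ) (hv : v = ![1, r]) :
    Matrix.vecMul v D = lam₁ • v ∧ Dᵀ.mulVec v = lam₁ • v :=
  stmt_7_general σx σy ρ δ hρ hρ' hδ D hD lam₁ hlam₁ r hr v hv
end

section
/- Let σx, σy > 0 and ρ ≠ 0. Define for δ > 0 the function r(δ) = −(δσx² + σy²)/(2δρ) − √((δσx² + σy²)² − 4δρ²)/(2δρ). Then r(δ) tends to −σx²/ρ as δ → ∞; i.e., in the high-privacy regime the equilibrium encoder coefficient ratio B/A converges to −σx²/ρ, making the revealed message essentially uncorrelated with the private parameter. -/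
/-!
Both terms of `r δ` are quotients by `δ`. Pulling `δ` inside the square root turns
`√((δσx² + σy²)² - 4δρ²) / δ` into a continuous function of `1/δ`, so as `1/δ → 0` it tends to
`√(σx⁴) = σx²`, while `(δσx² + σy²) / δ → σx²`; hence `r δ → -(σx² + σx²) / (2ρ)`.
-/

open Filter Topology

lemma tendsto_affine_div_atTop (a b : ℝ) :
    Tendsto (fun δ : ℝ => (δ * a + b) / δ) atTop (𝓝 a) := by
  have h : Tendsto (fun δ : ℝ => a + b * δ⁻¹) atTop (𝓝 (a + b * 0)) :=
    tendsto_const_nhds.add (tendsto_inv_atTop_zero.const_mul b)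
  rw [mul_zero, add_zero] at h
  refine h.congr' ?_
  filter_upwards [eventually_ne_atTop 0] with δ hδ
  field_simp

lemma sqrt_quadratic_div_eq (a b c : ℝ) {δ : ℝ} (hδ : 0 < δ) :
    Real.sqrt ((δ * a + b) ^ 2 - 4 * δ * c) / δ
      = Real.sqrt ((a + b * δ⁻¹) ^ 2 - 4 * c * δ⁻¹) := by
  have hscale :
      (a + b * δ⁻¹) ^ 2 - 4 * c * δ⁻¹ = (δ⁻¹) ^ 2 * ((δ * a + b) ^ 2 - 4 * δ * c) := by
    field_simp
  rw [hscale, Real.sqrt_mul (by positivity), Real.sqrt_sq (by positivity), div_eq_inv_mul]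

lemma tendsto_sqrt_quadratic_div_atTop (a b c : ℝ) :
    Tendsto (fun δ : ℝ => Real.sqrt ((δ * a + b) ^ 2 - 4 * δ * c) / δ) atTop (𝓝 |a|) := by
  have hcont : ContinuousAt (fun t : ℝ => Real.sqrt ((a + b * t) ^ 2 - 4 * c * t)) 0 := by
    fun_prop
  have h := hcont.tendsto.comp tendsto_inv_atTop_zero
  simp only [mul_zero, add_zero, sub_zero, Real.sqrt_sq_eq_abs] at h
  refine h.congr' ?_
  filter_upwards [eventually_gt_atTop 0] with δ hδ
  exact (sqrt_quadratic_div_eq a b c hδ).symm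

theorem stmt_8_general
    (σx σy ρ : ℝ)
    (r : ℝ → ℝ)
    (hr : r = fun δ => -(δ * σx ^ 2 + σy ^ 2) / (2 * δ * ρ)
        - Real.sqrt ((δ * σx ^ 2 + σy ^ 2) ^ 2 - 4 * δ * ρ ^ 2) / (2 * δ * ρ)) :
    Tendsto r atTop (nhds (-σx ^ 2 / ρ)) := by
  have hsplit : r = fun δ => -((δ * σx ^ 2 + σy ^ 2) / δ
      + Real.sqrt ((δ * σx ^ 2 + σy ^ 2) ^ 2 - 4 * δ * ρ ^ 2) / δ) / (2 * ρ) := by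
    rw [hr]
    funext δ
    ring
  have hlim : -(σx ^ 2 + |σx ^ 2|) / (2 * ρ) = -σx ^ 2 / ρ := by
    rw [abs_of_nonneg (sq_nonneg σx), ← two_mul, ← mul_neg, mul_div_mul_left _ _ two_ne_zero]
  rw [hsplit, ← hlim]
  exact (((tendsto_affine_div_atTop _ _).add
    (tendsto_sqrt_quadratic_div_atTop _ _ _)).neg).div_const _

theorem stmt_8
    (σx σy ρ : ℝ) (hσx : 0 < σx) (hσy : 0 < σy) (hρ : ρ ≠ 0)
    (r : ℝ → ℝ)
    (hr : r = fun δ => -(δ * σx ^ 2 + σy ^ 2) / (2 * δ * ρ)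
        - Real.sqrt ((δ * σx ^ 2 + σy ^ 2) ^ 2 - 4 * δ * ρ ^ 2) / (2 * δ * ρ)) :
    Tendsto r atTop (nhds (-σx ^ 2 / ρ)) :=
  stmt_8_general σx σy ρ r hr
end

section
/- Let σx, σy > 0 and ρ ≠ 0 with ρ² < σx²·σy². Define for δ > 0 the function r(δ) = −(δσx² + σy²)/(2δρ) − √((δσx² + σy²)² − 4δρ²)/(2δρ). Then 1/r(δ) tends to 0 as δ → 0⁺; i.e., the equilibrium encoder coefficient ratio A/B converges to 0 as the privacy concern vanishes, so in the limit the encoder transmits Y directly. -/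
open Filter

/-
The two terms of `r δ` share the denominator `2δρ`, so `1 / r δ = -2δρ / (N δ + √D δ)` with
`N δ = δσx² + σy²` and `D δ = N δ² - 4δρ²`. The denominator is continuous and equals `2σy² ≠ 0`
at `δ = 0`, while the numerator vanishes there, so `1 / r δ → 0`.
-/

theorem one_div_neg_div_sub_div {K : Type*} [DivisionRing K] (a b c : K) :
    1 / (-a / c - b / c) = -c / (a + b) := by
  rw [div_sub_div_same, ← neg_add', one_div, inv_div, neg_div, div_neg]

theorem continuous_add_sqrt_discr (σx σy ρ : ℝ) :
    Continuous fun δ : ℝ =>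
      δ * σx ^ 2 + σy ^ 2 + Real.sqrt ((δ * σx ^ 2 + σy ^ 2) ^ 2 - 4 * δ * ρ ^ 2) := by
  fun_prop

theorem add_sqrt_discr_zero (σx σy ρ : ℝ) :
    0 * σx ^ 2 + σy ^ 2 + Real.sqrt ((0 * σx ^ 2 + σy ^ 2) ^ 2 - 4 * 0 * ρ ^ 2) = 2 * σy ^ 2 := by
  simp [Real.sqrt_sq (sq_nonneg σy), two_mul]

theorem stmt_9_general
    (σx σy ρ : ℝ) (hσy : 0 < σy)
    (r : ℝ → ℝ)
    (hr : r = fun δ => -(δ * σx ^ 2 + σy ^ 2) / (2 * δ * ρ)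
        - Real.sqrt ((δ * σx ^ 2 + σy ^ 2) ^ 2 - 4 * δ * ρ ^ 2) / (2 * δ * ρ)) :
    Tendsto (fun δ => 1 / r δ) (nhdsWithin 0 (Set.Ioi 0)) (nhds 0) := by
  have hinv : (fun δ => 1 / r δ) = fun δ => -(2 * δ * ρ) /
      (δ * σx ^ 2 + σy ^ 2 + Real.sqrt ((δ * σx ^ 2 + σy ^ 2) ^ 2 - 4 * δ * ρ ^ 2)) := by
    funext δ
    rw [hr]
    exact one_div_neg_div_sub_div _ _ _
  have hden : 0 * σx ^ 2 + σy ^ 2 + Real.sqrt ((0 * σx ^ 2 + σy ^ 2) ^ 2 - 4 * 0 * ρ ^ 2) ≠ 0 := by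
    rw [add_sqrt_discr_zero]
    positivity
  have hcont : ContinuousAt (fun δ => -(2 * δ * ρ) /
      (δ * σx ^ 2 + σy ^ 2 + Real.sqrt ((δ * σx ^ 2 + σy ^ 2) ^ 2 - 4 * δ * ρ ^ 2))) 0 :=
    (by fun_prop : ContinuousAt (fun δ : ℝ => -(2 * δ * ρ)) 0).div
      (continuous_add_sqrt_discr σx σy ρ).continuousAt hden
  rw [hinv]
  simpa using hcont.tendsto.mono_left nhdsWithin_le_nhds

theorem stmt_9
    (σx σy ρ : ℝ) (hσx : 0 < σx) (hσy : 0 < σy) (hρ : ρ ≠ 0)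
    (hρ' : ρ ^ 2 < σx ^ 2 * σy ^ 2)
    (r : ℝ → ℝ)
    (hr : r = fun δ => -(δ * σx ^ 2 + σy ^ 2) / (2 * δ * ρ)
        - Real.sqrt ((δ * σx ^ 2 + σy ^ 2) ^ 2 - 4 * δ * ρ ^ 2) / (2 * δ * ρ)) :
    Tendsto (fun δ => 1 / r δ) (nhdsWithin 0 (Set.Ioi 0)) (nhds 0) :=
  stmt_9_general σx σy ρ hσy r hr
end

section
/- Consider the scalar MMSE Gaussian information bottleneck problem with privacy parameter δ > 0: the sender observes only X and chooses a measurable map γ : ℝ → ℝ, producing Z = γ(X), and the sender's cost is F(γ) = E[(Y − E[Y | σ(Z)])²] − δ·E[(X − E[X | σ(Z)])²]. Then: (i) if ρ² > δ·σx⁴, the identity encoder γ = id is optimal, i.e., F(id) ≤ F(γ) for every measurable γ : ℝ → ℝ; and (ii) if ρ² < δ·σx⁴, the noninformative constant encoder γ ≡ 0 is optimal, i.e., F(0) ≤ F(γ) for every measurable γ : ℝ → ℝ. -/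
/-!
Write `Y = a X + N` with `a = ρ / σx²` and `N = √(σy² - ρ²/σx²) G₂` independent of `X`. For any
σ-algebra `m ⊆ σ(X)` the estimation residual of `Y` splits as `a (X - E[X | m]) + (N - E N)`, whose
summands are independent, so `mmse(Y | m) = a² mmse(X | m) + Var N`. Hence
`F(γ) = (a² - δ) mmse(X | γ(X)) + Var N` is affine in `mmse(X | γ(X)) ∈ [0, Var X]`; the endpoints
are attained by `γ = id` and `γ ≡ 0`, and the sign of `a² - δ = ρ²/σx⁴ - δ` decides which is optimal.
-/

open MeasureTheory ProbabilityTheory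

lemma memLp_of_map_eq_gaussianReal {Ω : Type*} [MeasurableSpace Ω] {P : Measure Ω}
    {G : Ω → ℝ} (hG : Measurable G) {μ : ℝ} {v : NNReal}
    (hlaw : P.map G = gaussianReal μ v) (p : NNReal) : MemLp G p P :=
  (memLp_map_measure_iff aestronglyMeasurable_id hG.aemeasurable).1
    (hlaw ▸ memLp_id_gaussianReal p)

lemma Measurable.comap_comp_le {α β γ : Type*} [MeasurableSpace β] [MeasurableSpace γ]
    {f : β → γ} (hf : Measurable f) (X : α → β) :
    MeasurableSpace.comap (fun a => f (X a)) inferInstance ≤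
      MeasurableSpace.comap X inferInstance :=
  (hf.comp (comap_measurable X)).comap_le

noncomputable def mmse {Ω : Type*} {m₀ : MeasurableSpace Ω} (P : Measure[m₀] Ω)
    (m : MeasurableSpace Ω) (X : Ω → ℝ) : ℝ :=
  ∫ ω, (X ω - P[X | m] ω) ^ 2 ∂P

section

variable {Ω : Type*} {m₀ m : MeasurableSpace Ω} {P : Measure[m₀] Ω} {X N : Ω → ℝ}

lemma mmse_nonneg : 0 ≤ mmse P m X :=
  integral_nonneg fun _ => sq_nonneg _

variable [IsProbabilityMeasure P]

lemma mmse_le_variance (hm : m ≤ m₀) (hX : MemLp X 2 P) : mmse P m X ≤ Var[X; P] := by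
  rw [← integral_condVar_add_variance_condExp hm hX, condVar, integral_condExp hm]
  exact le_add_of_nonneg_right (variance_nonneg _ _)

lemma mmse_eq_zero_of_stronglyMeasurable (hm : m ≤ m₀) (hX : StronglyMeasurable[m] X)
    (hXi : Integrable X P) : mmse P m X = 0 := by
  simp [mmse, condExp_of_stronglyMeasurable hm hX hXi]

lemma mmse_bot (hX : AEMeasurable X P) : mmse P ⊥ X = Var[X; P] := by
  simp [mmse, condExp_bot, variance_eq_integral hX]

lemma condExp_mul_add_ae_eq_of_indepFun (hXm : Measurable[m₀] X) (hNm : Measurable[m₀] N)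
    (hm : m ≤ MeasurableSpace.comap X inferInstance) (hX : Integrable X P) (hN : Integrable N P)
    (hXN : IndepFun X N P) (a : ℝ) :
    P[fun ω => a * X ω + N ω | m] =ᵐ[P] fun ω => a * P[X | m] ω + P[N] := by
  have hN_indep_m : Indep (MeasurableSpace.comap N inferInstance) m P :=
    indep_of_indep_of_le_right ((IndepFun_iff_Indep X N P).1 hXN).symm hm
  filter_upwards [condExp_add (hX.const_mul a) hN m, condExp_smul a X m,
    condExp_indep_eq hNm.comap_le (hm.trans hXm.comap_le) (comap_measurable N).stronglyMeasurable
      hN_indep_m] with ω hsum hsmul hNω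
  change P[(fun x => a * X x) + N | m] ω = _
  rw [hsum]
  change P[a • X | m] ω + _ = _
  rw [hsmul, hNω]
  rfl

lemma mmse_mul_add_of_indepFun (hXm : Measurable[m₀] X) (hNm : Measurable[m₀] N)
    (hm : m ≤ MeasurableSpace.comap X inferInstance) (hX : MemLp X 2 P) (hN : MemLp N 2 P)
    (hXN : IndepFun X N P) (a : ℝ) :
    mmse P m (fun ω => a * X ω + N ω) = a ^ 2 * mmse P m X + Var[N; P] := by
  have hcond := condExp_mul_add_ae_eq_of_indepFun hXm hNm hm (hX.integrable one_le_two)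
    (hN.integrable one_le_two) hXN a
  set U : Ω → ℝ := fun ω => X ω - P[X | m] ω
  set V : Ω → ℝ := fun ω => N ω - P[N]
  have hU : MemLp U 2 P := hX.sub (hX.condExp one_le_two)
  have hV : MemLp V 2 P := hN.sub (memLp_const _)
  have hUV : IndepFun U V P := by
    refine (IndepFun_iff_Indep U V P).2
      (indep_of_indep_of_le ((IndepFun_iff_Indep X N P).1 hXN) ?_ ?_)
    · exact ((comap_measurable X).sub (stronglyMeasurable_condExp.mono hm).measurable).comap_le
    · exact ((comap_measurable N).sub measurable_const).comap_le
  have hcross : ∫ ω, U ω * V ω ∂P = 0 := by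
    have hV0 : ∫ ω, V ω ∂P = 0 := by
      simp [V, integral_sub (hN.integrable one_le_two) (integrable_const _)]
    rw [← Pi.mul_def, hUV.integral_mul_eq_mul_integral hU.1 hV.1, hV0, mul_zero]
  have hUV_int : Integrable (fun ω => U ω * V ω) P := hU.integrable_mul hV
  calc mmse P m (fun ω => a * X ω + N ω)
      = ∫ ω, a ^ 2 * U ω ^ 2 + 2 * a * (U ω * V ω) + V ω ^ 2 ∂P := by
        refine integral_congr_ae (hcond.mono fun ω hω => ?_)
        simp only [hω, U, V]
        ring
    _ = a ^ 2 * mmse P m X + 2 * a * ∫ ω, U ω * V ω ∂P + ∫ ω, V ω ^ 2 ∂P := by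
        have hU2 : Integrable (fun ω => a ^ 2 * U ω ^ 2) P := hU.integrable_sq.const_mul _
        have hUV2 : Integrable (fun ω => 2 * a * (U ω * V ω)) P := hUV_int.const_mul _
        rw [integral_add (f := fun ω => a ^ 2 * U ω ^ 2 + 2 * a * (U ω * V ω)) (hU2.add hUV2)
          hV.integrable_sq, integral_add hU2 hUV2, integral_const_mul, integral_const_mul]
        rfl
    _ = a ^ 2 * mmse P m X + Var[N; P] := by
        rw [hcross, variance_eq_integral hNm.aemeasurable]
        ring

noncomputable def bottleneckCost (P : Measure[m₀] Ω) (X Y : Ω → ℝ) (δ : ℝ) (γ : ℝ → ℝ) :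
    ℝ :=
  mmse P (MeasurableSpace.comap (fun ω => γ (X ω)) inferInstance) Y
    - δ * mmse P (MeasurableSpace.comap (fun ω => γ (X ω)) inferInstance) X

lemma bottleneckCost_mul_add (hXm : Measurable[m₀] X) (hNm : Measurable[m₀] N)
    (hX : MemLp X 2 P) (hN : MemLp N 2 P) (hXN : IndepFun X N P) (a δ : ℝ) {γ : ℝ → ℝ}
    (hγ : Measurable γ) :
    bottleneckCost P X (fun ω => a * X ω + N ω) δ γ =
      (a ^ 2 - δ) * mmse P (MeasurableSpace.comap (fun ω => γ (X ω)) inferInstance) X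
        + Var[N; P] := by
  rw [bottleneckCost, mmse_mul_add_of_indepFun hXm hNm (hγ.comap_comp_le X) hX hN hXN]
  ring

lemma bottleneckCost_id_le (hXm : Measurable[m₀] X) (hNm : Measurable[m₀] N)
    (hX : MemLp X 2 P) (hN : MemLp N 2 P) (hXN : IndepFun X N P) {a δ : ℝ} (h : δ < a ^ 2)
    {γ : ℝ → ℝ} (hγ : Measurable γ) :
    bottleneckCost P X (fun ω => a * X ω + N ω) δ (fun x => x) ≤
      bottleneckCost P X (fun ω => a * X ω + N ω) δ γ := by
  have hid : mmse P (MeasurableSpace.comap (fun ω => X ω) inferInstance) X = 0 :=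
    mmse_eq_zero_of_stronglyMeasurable hXm.comap_le (comap_measurable X).stronglyMeasurable
      (hX.integrable one_le_two)
  rw [bottleneckCost_mul_add hXm hNm hX hN hXN a δ measurable_id',
    bottleneckCost_mul_add hXm hNm hX hN hXN a δ hγ, hid, mul_zero, zero_add]
  exact le_add_of_nonneg_left (mul_nonneg (sub_nonneg.2 h.le) mmse_nonneg)

lemma bottleneckCost_const_le (hXm : Measurable[m₀] X) (hNm : Measurable[m₀] N)
    (hX : MemLp X 2 P) (hN : MemLp N 2 P) (hXN : IndepFun X N P) {a δ : ℝ} (h : a ^ 2 < δ)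
    {γ : ℝ → ℝ} (hγ : Measurable γ) :
    bottleneckCost P X (fun ω => a * X ω + N ω) δ (fun _ => 0) ≤
      bottleneckCost P X (fun ω => a * X ω + N ω) δ γ := by
  have hle := mmse_le_variance ((hγ.comap_comp_le X).trans hXm.comap_le) hX
  rw [bottleneckCost_mul_add hXm hNm hX hN hXN a δ measurable_const,
    bottleneckCost_mul_add hXm hNm hX hN hXN a δ hγ, MeasurableSpace.comap_const,
    mmse_bot hXm.aemeasurable]
  exact add_le_add_left (mul_le_mul_of_nonpos_left hle (sub_nonpos.2 h.le)) _

end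

theorem stmt_14_general
    {Ω : Type*} [MeasurableSpace Ω] (P : Measure Ω) [IsProbabilityMeasure P]
    (G₁ G₂ : Ω → ℝ) (hG₁ : Measurable G₁) (hG₂ : Measurable G₂)
    (hlaw₁ : P.map G₁ = gaussianReal 0 1) (hlaw₂ : P.map G₂ = gaussianReal 0 1)
    (hindep : IndepFun G₁ G₂ P)
    (σx σy ρ : ℝ) (hσx : 0 < σx)
    (X Y : Ω → ℝ)
    (hX : X = fun ω => σx * G₁ ω)
    (hY : Y = fun ω => (ρ / σx) * G₁ ω + Real.sqrt (σy ^ 2 - ρ ^ 2 / σx ^ 2) * G₂ ω)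
    (δ : ℝ)
    (F : (ℝ → ℝ) → ℝ)
    (hF : F = fun γ =>
      (∫ ω, (Y ω - (P[Y | MeasurableSpace.comap (fun ω => γ (X ω)) Real.measurableSpace]) ω) ^ 2 ∂P)
      - δ * ∫ ω, (X ω - (P[X | MeasurableSpace.comap (fun ω => γ (X ω)) Real.measurableSpace]) ω) ^ 2 ∂P) :
    (δ * σx ^ 4 < ρ ^ 2 →
      ∀ γ : ℝ → ℝ, Measurable γ → F (fun x => x) ≤ F γ) ∧
    (ρ ^ 2 < δ * σx ^ 4 →
      ∀ γ : ℝ → ℝ, Measurable γ → F (fun _ => 0) ≤ F γ) := by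
  set N : Ω → ℝ := fun ω => Real.sqrt (σy ^ 2 - ρ ^ 2 / σx ^ 2) * G₂ ω
  have hXm : Measurable X := hX ▸ hG₁.const_mul σx
  have hNm : Measurable N := hG₂.const_mul _
  have hX2 : MemLp X 2 P := hX ▸ (memLp_of_map_eq_gaussianReal hG₁ hlaw₁ 2).const_mul σx
  have hN2 : MemLp N 2 P := (memLp_of_map_eq_gaussianReal hG₂ hlaw₂ 2).const_mul _
  have hXN : IndepFun X N P := hX ▸ hindep.comp (measurable_const_mul _) (measurable_const_mul _)
  have hYXN : Y = fun ω => ρ / σx ^ 2 * X ω + N ω := by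
    ext ω
    simp only [hY, hX, N]
    field_simp
  have hFcost : F = bottleneckCost P X Y δ := hF
  have hcoeff : (ρ / σx ^ 2) ^ 2 = ρ ^ 2 / σx ^ 4 := by ring
  have hσx4 : 0 < σx ^ 4 := by positivity
  subst hFcost hYXN
  refine ⟨fun hδρ γ hγ => ?_, fun hρδ γ hγ => ?_⟩
  · refine bottleneckCost_id_le hXm hNm hX2 hN2 hXN ?_ hγ
    rwa [hcoeff, lt_div_iff₀ hσx4]
  · refine bottleneckCost_const_le hXm hNm hX2 hN2 hXN ?_ hγ
    rwa [hcoeff, div_lt_iff₀ hσx4]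

theorem stmt_14
    {Ω : Type*} [MeasurableSpace Ω] (P : Measure Ω) [IsProbabilityMeasure P]
    (G₁ G₂ : Ω → ℝ) (hG₁ : Measurable G₁) (hG₂ : Measurable G₂)
    (hlaw₁ : P.map G₁ = gaussianReal 0 1) (hlaw₂ : P.map G₂ = gaussianReal 0 1)
    (hindep : IndepFun G₁ G₂ P)
    (σx σy ρ : ℝ) (hσx : 0 < σx) (hσy : 0 < σy)
    (hρ : 0 < ρ ^ 2) (hρ' : ρ ^ 2 < σx ^ 2 * σy ^ 2)
    (X Y : Ω → ℝ)
    (hX : X = fun ω => σx * G₁ ω)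
    (hY : Y = fun ω => (ρ / σx) * G₁ ω + Real.sqrt (σy ^ 2 - ρ ^ 2 / σx ^ 2) * G₂ ω)
    (δ : ℝ) (hδ : 0 < δ)
    (F : (ℝ → ℝ) → ℝ)
    (hF : F = fun γ =>
      (∫ ω, (Y ω - (P[Y | MeasurableSpace.comap (fun ω => γ (X ω)) Real.measurableSpace]) ω) ^ 2 ∂P)
      - δ * ∫ ω, (X ω - (P[X | MeasurableSpace.comap (fun ω => γ (X ω)) Real.measurableSpace]) ω) ^ 2 ∂P) :
    (δ * σx ^ 4 < ρ ^ 2 →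
      ∀ γ : ℝ → ℝ, Measurable γ → F (fun x => x) ≤ F γ) ∧
    (ρ ^ 2 < δ * σx ^ 4 →
      ∀ γ : ℝ → ℝ, Measurable γ → F (fun _ => 0) ≤ F γ) :=
  stmt_14_general P G₁ G₂ hG₁ hG₂ hlaw₁ hlaw₂ hindep σx σy ρ hσx X Y hX hY δ F hF
end
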